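/- arXiv:1601.02817 — 2 statements merged into one kernel-verified Lean document; each statement's English description precedes it below -/
import Mathlib

section
/- The controllability Gramian Λ is positive definite (equivalently, coercive and hence invertible) if and only if the Kalman rank condition rank [B, AB, …, A^{N−1}B] = N holds. -/
/-!
Substituting `s = T - t`, `Λ = ∫₀ᵀ F s * (F s)ᵀ ds` with `F s = exp (s • A) * B`, so
`xᵀ Λ x = ∫₀ᵀ |xᵀ F s|² ds`, and `Λ` is positive definite iff no `x ≠ 0` makes `s ↦ xᵀ e^{sA} B`
vanish on `[0, T]`. If `xᵀ Aʲ B = 0` for `j < N`, Cayley–Hamilton gives it for all `j`, and the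
exponential series makes `xᵀ e^{sA} B` vanish identically. Conversely, if `xᵀ e^{sA} B` vanishes
on an open interval, differentiating at an interior point `s₀` shows that `yᵀ = xᵀ e^{s₀A}`
annihilates every `Aᵏ B`; under the rank condition `y = 0`, hence `x = 0` as `e^{s₀A}` is
invertible.
-/

open Matrix MeasureTheory

namespace Matrix

section Kalman

variable {R : Type*} {n m ι : Type*} [Fintype n]

theorem vecMul_pow_mul_eq_zero_of_forall_lt_card [CommRing R] [DecidableEq n]
    {A : Matrix n n R} {B : Matrix n m R} {y : n → R}
    (h : ∀ j < Fintype.card n, y ᵥ* (A ^ j * B) = 0) (k : ℕ) : y ᵥ* (A ^ k * B) = 0 := by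
  nontriviality R
  cases isEmpty_or_nonempty n
  · simp [Subsingleton.elim y 0]
  -- Cayley–Hamilton: `A ^ k` is a polynomial in `A` of degree less than `card n`.
  have hdeg : (Polynomial.X ^ k %ₘ A.charpoly).natDegree < Fintype.card n := by
    rw [← A.charpoly_natDegree_eq_dim]
    refine Polynomial.natDegree_modByMonic_lt _ A.charpoly_monic ?_
    rw [← A.charpoly_monic.natDegree_pos, charpoly_natDegree_eq_dim]
    exact Fintype.card_pos
  rw [pow_eq_aeval_mod_charpoly, Polynomial.aeval_eq_sum_range' hdeg, Matrix.sum_mul, vecMul_sum]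
  refine Finset.sum_eq_zero fun j hj => ?_
  rw [Matrix.smul_mul, vecMul_smul, h j (Finset.mem_range.mp hj), smul_zero]

def kalmanMatrix [Semiring R] [DecidableEq n] (A : Matrix n n R) (B : Matrix n m R) (k : ℕ) :
    Matrix n (Fin k × m) R :=
  of fun i p => (A ^ (p.1 : ℕ) * B) i p.2

theorem vecMul_kalmanMatrix_eq_zero_iff [Semiring R] [DecidableEq n] {A : Matrix n n R}
    {B : Matrix n m R} {k : ℕ} {y : n → R} :
    y ᵥ* kalmanMatrix A B k = 0 ↔ ∀ j < k, y ᵥ* (A ^ j * B) = 0 := by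
  simp only [funext_iff, Prod.forall, Fin.forall_iff]
  rfl

theorem rank_eq_card_iff [Field R] [Fintype ι] (K : Matrix n ι R) :
    K.rank = Fintype.card n ↔ ∀ y, y ᵥ* K = 0 → y = 0 := by
  rw [eq_comm, rank_eq_finrank_span_row, ← Set.finrank,
    ← linearIndependent_iff_card_eq_finrank_span, ← vecMul_injective_iff, ← coe_vecMulLinear,
    injective_iff_map_eq_zero]
  rfl

end Kalman

section Exponential

open NormedSpace

variable {n m : Type*} [Fintype n] [DecidableEq n]

theorem continuous_exp_smul (A : Matrix n n ℝ) : Continuous fun s : ℝ => exp (s • A) := by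
  let : NormedRing (Matrix n n ℝ) := Matrix.linftyOpNormedRing
  let : NormedAlgebra ℝ (Matrix n n ℝ) := Matrix.linftyOpNormedAlgebra
  exact (differentiable_exp_smul_const ℝ A).continuous

theorem vecMul_exp_smul_mul_eq_zero {A : Matrix n n ℝ} {B : Matrix n m ℝ} {y : n → ℝ}
    (h : ∀ k : ℕ, y ᵥ* (A ^ k * B) = 0) (s : ℝ) : y ᵥ* (exp (s • A) * B) = 0 := by
  let : NormedRing (Matrix n n ℝ) := Matrix.linftyOpNormedRing
  let : NormedAlgebra ℝ (Matrix n n ℝ) := Matrix.linftyOpNormedAlgebra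
  let L : Matrix n n ℝ →L[ℝ] m → ℝ := LinearMap.toContinuousLinearMap
    { toFun := fun X => y ᵥ* (X * B)
      map_add' := fun X Y => by simp [Matrix.add_mul, vecMul_add]
      map_smul' := fun c X => by simp [Matrix.smul_mul, vecMul_smul] }
  refine ((exp_series_hasSum_exp' (𝕂 := ℝ) (s • A)).mapL L).unique ?_
  convert hasSum_zero with k
  simp [L, smul_pow, h]

theorem hasDerivAt_vecMul_exp_smul_mul [Fintype m] (y : n → ℝ) (A : Matrix n n ℝ)
    (X : Matrix n m ℝ) (s : ℝ) :
    HasDerivAt (fun t : ℝ => y ᵥ* (exp (t • A) * X)) (y ᵥ* (exp (s • A) * (A * X))) s := by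
  let : NormedRing (Matrix n n ℝ) := Matrix.linftyOpNormedRing
  let : NormedAlgebra ℝ (Matrix n n ℝ) := Matrix.linftyOpNormedAlgebra
  let L : Matrix n n ℝ →ₗ[ℝ] m → ℝ :=
    { toFun := fun M => y ᵥ* (M * X)
      map_add' := fun M N => by simp [Matrix.add_mul, vecMul_add]
      map_smul' := fun c M => by simp [Matrix.smul_mul, vecMul_smul] }
  have h := L.toContinuousLinearMap.hasFDerivAt.comp_hasDerivAt s
    (hasDerivAt_exp_smul_const (𝕂 := ℝ) A s)
  exact h.congr_deriv (congrArg (y ᵥ* ·) (Matrix.mul_assoc _ _ _))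

theorem vecMul_exp_smul_mul_pow_mul_eq_zero [Fintype m] {A : Matrix n n ℝ} {B : Matrix n m ℝ}
    {y : n → ℝ} {U : Set ℝ} (hU : IsOpen U) (h : ∀ s ∈ U, y ᵥ* (exp (s • A) * B) = 0) (k : ℕ) :
    ∀ s ∈ U, y ᵥ* (exp (s • A) * (A ^ k * B)) = 0 := by
  induction k with
  | zero => simpa using h
  | succ k ih =>
    intro s hs
    have hloc : (fun t => y ᵥ* (exp (t • A) * (A ^ k * B))) =ᶠ[nhds s] fun _ => 0 :=
      Filter.eventuallyEq_of_mem (hU.mem_nhds hs) ih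
    rw [pow_succ', Matrix.mul_assoc]
    exact (hasDerivAt_vecMul_exp_smul_mul y A _ s).unique
      ((hasDerivAt_const s 0).congr_of_eventuallyEq hloc)

theorem forall_eq_zero_of_vecMul_exp_smul_mul_eqOn_iff [Fintype m] {A : Matrix n n ℝ}
    {B : Matrix n m ℝ} {U : Set ℝ} (hU : (interior U).Nonempty) :
    (∀ x : n → ℝ, (∀ s ∈ U, x ᵥ* (exp (s • A) * B) = 0) → x = 0) ↔
      ∀ y : n → ℝ, (∀ j < Fintype.card n, y ᵥ* (A ^ j * B) = 0) → y = 0 := by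
  refine ⟨fun hobs y hy => hobs y fun s _ =>
    vecMul_exp_smul_mul_eq_zero (vecMul_pow_mul_eq_zero_of_forall_lt_card hy) s, fun h x hx => ?_⟩
  obtain ⟨s, hs⟩ := hU
  have hxs : x ᵥ* exp (s • A) = 0 := h _ fun j _ => by
    rw [vecMul_vecMul]
    exact vecMul_exp_smul_mul_pow_mul_eq_zero isOpen_interior
      (fun t ht => hx t (interior_subset ht)) j s hs
  exact vecMul_injective_of_isUnit (isUnit_exp _) (hxs.trans (zero_vecMul _).symm)

end Exponential

end Matrix

-- Only now, so that this entrywise norm never meets the operator norm used for `exp` above.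
attribute [local instance] Matrix.normedAddCommGroup Matrix.normedSpace

namespace Matrix

section Gram

variable {n m : Type*} [Fintype n] [Fintype m] {a b : ℝ}

theorem transpose_intervalIntegral {G : ℝ → Matrix n m ℝ} (hG : Continuous G) :
    (∫ t in a..b, G t)ᵀ = ∫ t in a..b, (G t)ᵀ :=
  ((transposeLinearEquiv n m ℝ ℝ).toLinearMap.toContinuousLinearMap.intervalIntegral_comp_comm
    (hG.intervalIntegrable (μ := volume) a b)).symm

theorem dotProduct_intervalIntegral_mulVec {G : ℝ → Matrix n n ℝ}
    (hG : Continuous G) (x : n → ℝ) :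
    x ⬝ᵥ (∫ t in a..b, G t) *ᵥ x = ∫ t in a..b, x ⬝ᵥ G t *ᵥ x := by
  let L : Matrix n n ℝ →ₗ[ℝ] ℝ :=
    { toFun := fun M => x ⬝ᵥ M *ᵥ x
      map_add' := fun M N => by simp [add_mulVec, dotProduct_add]
      map_smul' := fun c M => by simp [smul_mulVec, dotProduct_smul] }
  exact (L.toContinuousLinearMap.intervalIntegral_comp_comm
    (hG.intervalIntegrable (μ := volume) a b)).symm

theorem dotProduct_mul_transpose_mulVec (F : Matrix n m ℝ) (x : n → ℝ) :
    x ⬝ᵥ (F * Fᵀ) *ᵥ x = (x ᵥ* F) ⬝ᵥ (x ᵥ* F) := by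
  rw [← mulVec_mulVec, dotProduct_mulVec, mulVec_transpose]

theorem posDef_intervalIntegral_mul_transpose_iff {F : ℝ → Matrix n m ℝ} (hF : Continuous F)
    (hab : a < b) :
    (∫ t in a..b, F t * (F t)ᵀ).PosDef ↔
      ∀ x : n → ℝ, (∀ t ∈ Set.Icc a b, x ᵥ* F t = 0) → x = 0 := by
  have hG : Continuous fun t => F t * (F t)ᵀ := hF.matrix_mul hF.matrix_transpose
  have hsymm : (∫ t in a..b, F t * (F t)ᵀ).IsHermitian := by
    rw [isHermitian_iff_isSymm, IsSymm, transpose_intervalIntegral hG]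
    simp [transpose_mul]
  rw [posDef_iff_dotProduct_mulVec]
  simp only [star_trivial, dotProduct_intervalIntegral_mulVec hG, dotProduct_mul_transpose_mulVec]
  constructor
  · rintro ⟨-, hpos⟩ x hx
    by_contra hx0
    have hzero : ∫ t in a..b, (x ᵥ* F t) ⬝ᵥ (x ᵥ* F t) = 0 := by
      rw [intervalIntegral.integral_congr (g := fun _ => 0) fun t ht => ?_,
        intervalIntegral.integral_zero]
      rw [Set.uIcc_of_le hab.le] at ht
      simp [hx t ht]
    exact (hpos hx0).ne' hzero
  · refine fun h => ⟨hsymm, fun x hx0 => ?_⟩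
    obtain ⟨t, ht, hne⟩ : ∃ t ∈ Set.Icc a b, x ᵥ* F t ≠ 0 := by
      by_contra! hvanish
      exact hx0 (h x hvanish)
    have hcont : Continuous fun t => (x ᵥ* F t) ⬝ᵥ (x ᵥ* F t) :=
      (continuous_const.matrix_vecMul hF).dotProduct (continuous_const.matrix_vecMul hF)
    exact intervalIntegral.integral_pos hab hcont.continuousOn
      (fun t _ => dotProduct_self_star_nonneg _)
      ⟨t, ht, (dotProduct_self_star_nonneg _).lt_of_ne' (mt dotProduct_self_eq_zero.mp hne)⟩

end Gram

end Matrix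

/-- The controllability Gramian `Λ = ∫₀^T e^{(T−t)A} B Bᵀ e^{(T−t)Aᵀ} dt` is positive
definite (hence coercive and invertible) if and only if the Kalman rank condition
`rank [B, AB, …, A^{N−1}B] = N` holds. -/
theorem gramian_posDef_iff_kalman_rank
    {N M : ℕ} (A : Matrix (Fin N) (Fin N) ℝ) (B : Matrix (Fin N) (Fin M) ℝ)
    (T : ℝ) (hT : 0 < T)
    (Λ : Matrix (Fin N) (Fin N) ℝ)
    (hΛ : Λ = ∫ t in (0:ℝ)..T,
      NormedSpace.exp ((T - t) • A) * B * Bᵀ * NormedSpace.exp ((T - t) • Aᵀ)) :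
    Λ.PosDef ↔
      (Matrix.of fun (i : Fin N) (p : Fin N × Fin M) =>
        ((A ^ (p.1 : ℕ)) * B) i p.2).rank = N := by
  have hΛ' : Λ = ∫ s in (0:ℝ)..T,
      NormedSpace.exp (s • A) * B * (NormedSpace.exp (s • A) * B)ᵀ := by
    have hsub := intervalIntegral.integral_comp_sub_left
      (fun s => NormedSpace.exp (s • A) * B * (NormedSpace.exp (s • A) * B)ᵀ) (a := 0) (b := T) T
    rw [sub_self, sub_zero] at hsub
    rw [hΛ, ← hsub]
    simp [transpose_mul, ← exp_transpose, Matrix.mul_assoc]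
  have hrank := rank_eq_card_iff (kalmanMatrix A B N)
  rw [Fintype.card_fin] at hrank
  have hU : (interior (Set.Icc 0 T)).Nonempty := by
    rw [interior_Icc]; exact Set.nonempty_Ioo.2 hT
  rw [hΛ', posDef_intervalIntegral_mul_transpose_iff
    ((continuous_exp_smul A).matrix_mul continuous_const) hT,
    forall_eq_zero_of_vecMul_exp_smul_mul_eqOn_iff hU]
  simp only [Fintype.card_fin, ← vecMul_kalmanMatrix_eq_zero_iff]
  exact hrank.symm
end

section
/- (General greedy step is weak-greedy optimal.) Let Φ_j ⊂ ℝ^N be a linear subspace. Suppose max_{ν̃ ∈ 𝒩̃} dist(b_ν̃, Λ_ν̃ Φ_j) ≥ ε/2, and let ν_{j+1} ∈ 𝒩̃ attain this maximum. Then dist(φ⁰_{ν_{j+1}}, Φ_j) ≥ γ · sup_{ν ∈ 𝒩} dist(φ⁰_ν, Φ_j), where γ = Λ₋ / (2 Λ₊). -/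
/-!
Uniform controllability makes each `Λ_ν` bi-Lipschitz with constants `Λ₋` and `Λ₊` (the upper
bound needs symmetry: the operator norm of a symmetric map is the supremum of its Rayleigh
quotient), so `dist(b_ν, Λ_ν Φ_j)` is comparable to `dist(φ⁰_ν, Φ_j)` up to these factors.
Any `ν ∈ 𝒩` is `δ`-close to a net point `μ`, and the choice of `δ` makes
`Λ₋ · |φ⁰_ν - φ⁰_μ| ≤ ε/2`, which is at most the maximal surrogate; hence
`Λ₋ · dist(φ⁰_ν, Φ_j)` is at most twice the maximal surrogate, which in turn is at most
`Λ₊ · dist(φ⁰_{ν_{j+1}}, Φ_j)`.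
-/

open Metric

open scoped RealInnerProductSpace

section InnerProductSpace

variable {E : Type*} [NormedAddCommGroup E] [InnerProductSpace ℝ E]

theorem mul_norm_le_norm_of_mul_sq_le_inner {c : ℝ} {x y : E} (h : c * ‖x‖ ^ 2 ≤ ⟪y, x⟫) :
    c * ‖x‖ ≤ ‖y‖ := by
  rcases eq_or_ne x 0 with rfl | hx
  · simp
  have hxpos : 0 < ‖x‖ := norm_pos_iff.2 hx
  refine le_of_mul_le_mul_right ?_ hxpos
  calc c * ‖x‖ * ‖x‖ = c * ‖x‖ ^ 2 := by ring
    _ ≤ ‖y‖ * ‖x‖ := h.trans (real_inner_le_norm y x)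

theorem ContinuousLinearMap.opNorm_le_of_isSymmetric_of_abs_inner_le {T : E →L[ℝ] E}
    (hT : (T : E →ₗ[ℝ] E).IsSymmetric) {c : ℝ} (hc : 0 ≤ c)
    (h : ∀ x, |⟪T x, x⟫| ≤ c * ‖x‖ ^ 2) : ‖T‖ ≤ c := by
  rw [T.norm_eq_iSup_rayleighQuotient hT]
  refine ciSup_le fun x => ?_
  rcases eq_or_ne x 0 with rfl | hx
  · simpa using hc
  rw [rayleighQuotient, reApplyInnerSelf_apply, abs_div, abs_sq,
    div_le_iff₀ (by positivity)]
  exact h x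

end InnerProductSpace

theorem Matrix.norm_toEuclideanLin_apply_le {n : Type*} [Fintype n] [DecidableEq n]
    {A : Matrix n n ℝ} (hA : A.IsSymm) {c : ℝ} (hc : 0 ≤ c)
    (hpos : ∀ x, 0 ≤ ⟪toEuclideanLin A x, x⟫)
    (hle : ∀ x, ⟪toEuclideanLin A x, x⟫ ≤ c * ‖x‖ ^ 2) (x : EuclideanSpace ℝ n) :
    ‖toEuclideanLin A x‖ ≤ c * ‖x‖ := by
  set T : EuclideanSpace ℝ n →L[ℝ] EuclideanSpace ℝ n := toEuclideanCLM (𝕜 := ℝ) A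
  have hsymm : (T : EuclideanSpace ℝ n →ₗ[ℝ] EuclideanSpace ℝ n).IsSymmetric :=
    isSymmetric_toEuclideanLin_iff.2 (isHermitian_iff_isSymm.2 hA)
  have hnorm : ‖T‖ ≤ c :=
    T.opNorm_le_of_isSymmetric_of_abs_inner_le hsymm hc fun x =>
      (abs_of_nonneg (hpos x)).trans_le (hle x)
  calc ‖toEuclideanLin A x‖ = ‖T x‖ := rfl
    _ ≤ ‖T‖ * ‖x‖ := T.le_opNorm x
    _ ≤ c * ‖x‖ := by gcongr

section Submodule

variable {E F : Type*} [NormedAddCommGroup E] [NormedSpace ℝ E]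
  [NormedAddCommGroup F] [NormedSpace ℝ F]

theorem Submodule.mul_infDist_le_infDist_map {T : E →ₗ[ℝ] F} {c : ℝ} (hc : 0 ≤ c)
    (hT : ∀ v, c * ‖v‖ ≤ ‖T v‖) (K : Submodule ℝ E) (x : E) :
    c * infDist x (K : Set E) ≤ infDist (T x) (K.map T : Set F) := by
  refine (le_infDist ⟨0, (K.map T).zero_mem⟩).2 ?_
  rintro _ ⟨y, hy, rfl⟩
  calc c * infDist x (K : Set E) ≤ c * dist x y := by
        gcongr
        exact infDist_le_dist_of_mem hy
    _ ≤ dist (T x) (T y) := by simpa only [dist_eq_norm, map_sub] using hT (x - y)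

theorem Submodule.infDist_map_le_mul {T : E →ₗ[ℝ] F} {C : ℝ} (hC : 0 ≤ C)
    (hT : ∀ v, ‖T v‖ ≤ C * ‖v‖) (K : Submodule ℝ E) (x : E) :
    infDist (T x) (K.map T : Set F) ≤ C * infDist x (K : Set E) := by
  rw [infDist_eq_iInf (s := (K : Set E)), Real.mul_iInf_of_nonneg hC]
  refine le_ciInf fun y => ?_
  calc infDist (T x) (K.map T : Set F) ≤ dist (T x) (T y) :=
        infDist_le_dist_of_mem (Submodule.mem_map_of_mem y.2)
    _ ≤ C * dist x y := by simpa only [dist_eq_norm, map_sub] using hT (x - y)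

end Submodule

theorem greedy_general_step_general
    {d N : ℕ}
    (𝒩 : Set (EuclideanSpace ℝ (Fin d)))
    (Λm Λp : ℝ) (hΛm : 0 < Λm) (hmp : Λm ≤ Λp)
    (Λ : EuclideanSpace ℝ (Fin d) → Matrix (Fin N) (Fin N) ℝ)
    (hsym : ∀ ν ∈ 𝒩, (Λ ν).IsSymm)
    (hlow : ∀ ν ∈ 𝒩, ∀ ψ : EuclideanSpace ℝ (Fin N),
      Λm * ‖ψ‖ ^ 2 ≤ (inner ℝ (Matrix.toEuclideanLin (Λ ν) ψ) ψ : ℝ))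
    (hupp : ∀ ν ∈ 𝒩, ∀ ψ : EuclideanSpace ℝ (Fin N),
      (inner ℝ (Matrix.toEuclideanLin (Λ ν) ψ) ψ : ℝ) ≤ Λp * ‖ψ‖ ^ 2)
    (b φ : EuclideanSpace ℝ (Fin d) → EuclideanSpace ℝ (Fin N))
    (hφ : ∀ ν ∈ 𝒩, Matrix.toEuclideanLin (Λ ν) (φ ν) = b ν)
    (Cφ : ℝ) (hCφ : 0 < Cφ)
    (hLip : ∀ ν ∈ 𝒩, ∀ μ ∈ 𝒩, ‖φ ν - φ μ‖ ≤ Cφ * ‖ν - μ‖)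
    (ε δ : ℝ) (hδ : δ ≤ ε / (2 * Cφ * Λm))
    (Nnet : Finset (EuclideanSpace ℝ (Fin d))) (hNnet : ↑Nnet ⊆ 𝒩)
    (hnet : ∀ ν ∈ 𝒩, ∃ μ ∈ Nnet, ‖ν - μ‖ < δ)
    (Φj : Submodule ℝ (EuclideanSpace ℝ (Fin N)))
    (νj : EuclideanSpace ℝ (Fin d)) (hνj : νj ∈ Nnet)
    (hmax : ∀ μ ∈ Nnet,
      infDist (b μ) (Φj.map (Matrix.toEuclideanLin (Λ μ)) : Set (EuclideanSpace ℝ (Fin N))) ≤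
        infDist (b νj) (Φj.map (Matrix.toEuclideanLin (Λ νj)) : Set (EuclideanSpace ℝ (Fin N))))
    (hbig : ε / 2 ≤
      infDist (b νj) (Φj.map (Matrix.toEuclideanLin (Λ νj)) : Set (EuclideanSpace ℝ (Fin N)))) :
    (Λm / (2 * Λp)) *
        (⨆ ν : 𝒩, infDist (φ (ν : EuclideanSpace ℝ (Fin d)))
          (Φj : Set (EuclideanSpace ℝ (Fin N)))) ≤
      infDist (φ νj) (Φj : Set (EuclideanSpace ℝ (Fin N))) := by
  have hΛp : 0 < Λp := hΛm.trans_le hmp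
  have hlower : ∀ ν ∈ 𝒩, Λm * infDist (φ ν) Φj ≤
      infDist (b ν) (Φj.map (Matrix.toEuclideanLin (Λ ν)) : Set (EuclideanSpace ℝ (Fin N))) :=
    fun ν hν => hφ ν hν ▸ Φj.mul_infDist_le_infDist_map hΛm.le
      (fun v => mul_norm_le_norm_of_mul_sq_le_inner (hlow ν hν v)) (φ ν)
  have hνj𝒩 : νj ∈ 𝒩 := hNnet hνj
  have hupper : infDist (b νj)
      (Φj.map (Matrix.toEuclideanLin (Λ νj)) : Set (EuclideanSpace ℝ (Fin N))) ≤
        Λp * infDist (φ νj) Φj :=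
    hφ νj hνj𝒩 ▸ Φj.infDist_map_le_mul hΛp.le
      (Matrix.norm_toEuclideanLin_apply_le (hsym νj hνj𝒩) hΛp.le
        (fun x => (hlow νj hνj𝒩 x).trans' (by positivity)) (hupp νj hνj𝒩)) (φ νj)
  have hbound : ∀ ν ∈ 𝒩, Λm * infDist (φ ν) Φj ≤ 2 * Λp * infDist (φ νj) Φj := by
    intro ν hν
    obtain ⟨μ, hμ, hνμ⟩ := hnet ν hν
    have hclose : Λm * dist (φ ν) (φ μ) ≤ ε / 2 := by
      have hδ' : δ * (2 * Cφ * Λm) ≤ ε := (le_div_iff₀ (by positivity)).1 hδ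
      calc Λm * dist (φ ν) (φ μ) ≤ Λm * (Cφ * δ) := by
            rw [dist_eq_norm]
            gcongr
            exact (hLip ν hν μ (hNnet hμ)).trans (by gcongr)
        _ ≤ ε / 2 := by linarith
    calc Λm * infDist (φ ν) Φj ≤ Λm * infDist (φ μ) Φj + Λm * dist (φ ν) (φ μ) := by
          rw [← mul_add]
          gcongr
          exact infDist_le_infDist_add_dist
      _ ≤ 2 * Λp * infDist (φ νj) Φj := by
          linarith [(hlower μ (hNnet hμ)).trans (hmax μ hμ), hbig, hupper]
  rw [Real.mul_iSup_of_nonneg (by positivity)]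
  refine Real.iSup_le (fun ν => ?_) infDist_nonneg
  rw [div_mul_eq_mul_div, div_le_iff₀ (by positivity)]
  linarith [hbound ν ν.2]

/-- **General greedy step is weak-greedy optimal.** If `ν_{j+1} ∈ 𝒩̃` maximises the
surrogate `dist(b_ν̃, Λ_ν̃ Φ_j)` over the `δ`-net `𝒩̃` and this maximum is at least `ε/2`,
then `dist(φ⁰_{ν_{j+1}}, Φ_j) ≥ γ · sup_{ν ∈ 𝒩} dist(φ⁰_ν, Φ_j)` with `γ = Λ₋/(2Λ₊)`. -/
theorem greedy_general_step
    {d N : ℕ}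
    (𝒩 : Set (EuclideanSpace ℝ (Fin d))) (h𝒩 : IsCompact 𝒩)
    (Λm Λp : ℝ) (hΛm : 0 < Λm) (hmp : Λm ≤ Λp)
    (Λ : EuclideanSpace ℝ (Fin d) → Matrix (Fin N) (Fin N) ℝ)
    (hsym : ∀ ν ∈ 𝒩, (Λ ν).IsSymm)
    (hlow : ∀ ν ∈ 𝒩, ∀ ψ : EuclideanSpace ℝ (Fin N),
      Λm * ‖ψ‖ ^ 2 ≤ (inner ℝ (Matrix.toEuclideanLin (Λ ν) ψ) ψ : ℝ))
    (hupp : ∀ ν ∈ 𝒩, ∀ ψ : EuclideanSpace ℝ (Fin N),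
      (inner ℝ (Matrix.toEuclideanLin (Λ ν) ψ) ψ : ℝ) ≤ Λp * ‖ψ‖ ^ 2)
    (b φ : EuclideanSpace ℝ (Fin d) → EuclideanSpace ℝ (Fin N))
    (hφ : ∀ ν ∈ 𝒩, Matrix.toEuclideanLin (Λ ν) (φ ν) = b ν)
    (Cφ : ℝ) (hCφ : 0 < Cφ)
    (hLip : ∀ ν ∈ 𝒩, ∀ μ ∈ 𝒩, ‖φ ν - φ μ‖ ≤ Cφ * ‖ν - μ‖)
    (ε δ : ℝ) (hε : 0 < ε) (hδ0 : 0 < δ) (hδ : δ ≤ ε / (2 * Cφ * Λm))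
    (Nnet : Finset (EuclideanSpace ℝ (Fin d))) (hNnet : ↑Nnet ⊆ 𝒩)
    (hnet : ∀ ν ∈ 𝒩, ∃ μ ∈ Nnet, ‖ν - μ‖ < δ)
    (Φj : Submodule ℝ (EuclideanSpace ℝ (Fin N)))
    (νj : EuclideanSpace ℝ (Fin d)) (hνj : νj ∈ Nnet)
    (hmax : ∀ μ ∈ Nnet,
      infDist (b μ) (Φj.map (Matrix.toEuclideanLin (Λ μ)) : Set (EuclideanSpace ℝ (Fin N))) ≤
        infDist (b νj) (Φj.map (Matrix.toEuclideanLin (Λ νj)) : Set (EuclideanSpace ℝ (Fin N))))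
    (hbig : ε / 2 ≤
      infDist (b νj) (Φj.map (Matrix.toEuclideanLin (Λ νj)) : Set (EuclideanSpace ℝ (Fin N)))) :
    (Λm / (2 * Λp)) *
        (⨆ ν : 𝒩, infDist (φ (ν : EuclideanSpace ℝ (Fin d)))
          (Φj : Set (EuclideanSpace ℝ (Fin N)))) ≤
      infDist (φ νj) (Φj : Set (EuclideanSpace ℝ (Fin N))) :=
  greedy_general_step_general 𝒩 Λm Λp hΛm hmp Λ hsym hlow hupp b φ hφ Cφ hCφ hLip ε δ hδ Nnet hNnet
    hnet Φj νj hνj hmax hbig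
end
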